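/- arXiv:1701.06955 — 2 statements merged into one kernel-verified Lean document; each statement's English description precedes it below -/
import Mathlib

section
/- The cross-covariance between indicator variables of the first and any later coordinate is Cov([ε_1 = i],[ε_τ = j]) = δ·p_i(1−p_i) if i = j and −δ·p_i·p_j if i ≠ j, for all τ ≥ 2. -/
open Finset

/-- Probability of an FK-dependent sequence `e : Fin N → Fin K`:
`P(e) = p_{e₀} · ∏_{j≠0} (pᵢ⁺)^{[e_j = e₀]} · ∏_{l≠e₀} (p_l⁻)^{[e_j = l]}`
with `pᵢ⁺ = pᵢ + δ(1−pᵢ)` and `pᵢ⁻ = pᵢ(1−δ)`. -/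
noncomputable def fkP {K N : ℕ} [NeZero N] (p : Fin K → ℝ) (δ : ℝ)
    (e : Fin N → Fin K) : ℝ :=
  p (e 0) * ∏ j ∈ Finset.univ.filter (fun j : Fin N => j ≠ 0),
    (if e j = e 0 then p (e 0) + δ * (1 - p (e 0)) else p (e j) * (1 - δ))

/-- Expectation of a real-valued function of an FK-dependent sequence. -/
noncomputable def fkE {K N : ℕ} [NeZero N] (p : Fin K → ℝ) (δ : ℝ)
    (f : (Fin N → Fin K) → ℝ) : ℝ :=
  ∑ e : Fin N → Fin K, fkP p δ e * f e

/-!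
Given `ε₁ = a`, the later coordinates are independent with law `q(a, ·) = fkKernel p δ a`, and
`p` is stationary for `q`: `∑ₐ pₐ q(a, c) = p_c`. So every coordinate has law `p` and
`(ε₁, ε_τ)` has law `p_i q(i, j)`; the covariance is `p_i (q(i, j) − p_j)`.
-/

theorem Fintype.sum_apply_mul_prod_erase {ι α R : Type*} [Fintype ι] [DecidableEq ι] [Fintype α]
    [CommSemiring R] (i : ι) (f : α → R) (g : ι → α → R) :
    ∑ x : ι → α, f (x i) * ∏ j ∈ univ.erase i, g j (x j)
      = (∑ a, f a) * ∏ j ∈ univ.erase i, ∑ a, g j a := by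
  have prod_update (φ : ι → (α → R) → R) :
      ∏ j, φ j (Function.update g i f j) = φ i f * ∏ j ∈ univ.erase i, φ j (g j) := by
    rw [← mul_prod_erase _ _ (mem_univ i), Function.update_self]
    congr 1
    exact Finset.prod_congr rfl fun j hj => by rw [Function.update_of_ne (ne_of_mem_erase hj)]
  calc ∑ x : ι → α, f (x i) * ∏ j ∈ univ.erase i, g j (x j)
      = ∑ x : ι → α, ∏ j, Function.update g i f j (x j) :=
        Finset.sum_congr rfl fun x _ => (prod_update fun j h => h (x j)).symm
    _ = ∏ j, ∑ a, Function.update g i f j a := (Fintype.prod_sum _).symm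
    _ = (∑ a, f a) * ∏ j ∈ univ.erase i, ∑ a, g j a := prod_update fun _ h => ∑ a, h a

theorem Fintype.sum_apply_mul_prod_erase_dep {ι α R : Type*} [Fintype ι] [DecidableEq ι]
    [Fintype α] [DecidableEq α] [CommSemiring R] (i : ι) (f : α → R) (g : α → ι → α → R) :
    ∑ x : ι → α, f (x i) * ∏ j ∈ univ.erase i, g (x i) j (x j)
      = ∑ a, f a * ∏ j ∈ univ.erase i, ∑ b, g a j b := by
  have condition_on_i (x : ι → α) : f (x i) * ∏ j ∈ univ.erase i, g (x i) j (x j)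
      = ∑ a, (if x i = a then f a else 0) * ∏ j ∈ univ.erase i, g a j (x j) := by
    simp only [ite_mul, zero_mul, Finset.sum_ite_eq, Finset.mem_univ, if_true]
  simp only [condition_on_i]
  rw [Finset.sum_comm]
  refine Finset.sum_congr rfl fun a _ => ?_
  rw [Fintype.sum_apply_mul_prod_erase i (fun b => if b = a then f a else 0) (g a),
    Finset.sum_ite_eq', if_pos (mem_univ a)]

section FKDependent

variable {K N : ℕ} (p : Fin K → ℝ) (δ : ℝ)

def fkKernel (a c : Fin K) : ℝ :=
  if c = a then p a + δ * (1 - p a) else p c * (1 - δ)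

theorem fkP_eq_mul_prod_fkKernel [NeZero N] (e : Fin N → Fin K) :
    fkP p δ e = p (e 0) * ∏ j ∈ univ.erase 0, fkKernel p δ (e 0) (e j) := by
  rw [fkP, filter_ne']
  rfl

theorem fkKernel_self (a : Fin K) : fkKernel p δ a a = p a + δ * (1 - p a) := if_pos rfl

theorem fkKernel_of_ne {a c : Fin K} (h : c ≠ a) : fkKernel p δ a c = p c * (1 - δ) := if_neg h

theorem fkE_mul_prod_erase_zero [NeZero N] (F : Fin K → ℝ) (G : Fin K → Fin N → Fin K → ℝ) :
    fkE p δ (fun e => F (e 0) * ∏ j ∈ univ.erase 0, G (e 0) j (e j))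
      = ∑ a, p a * F a * ∏ j ∈ univ.erase 0, ∑ c, fkKernel p δ a c * G a j c := by
  rw [fkE, ← Fintype.sum_apply_mul_prod_erase_dep]
  refine Finset.sum_congr rfl fun e _ => ?_
  rw [fkP_eq_mul_prod_fkKernel, prod_mul_distrib]
  ring

variable {p}

theorem sum_fkKernel (hsum : ∑ i, p i = 1) (a : Fin K) : ∑ c, fkKernel p δ a c = 1 := by
  rw [← add_sum_erase _ _ (mem_univ a), fkKernel_self,
    sum_congr rfl fun c hc => fkKernel_of_ne p δ (ne_of_mem_erase hc), ← sum_mul,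
    sum_erase_eq_sub (mem_univ a), hsum]
  ring

theorem sum_mul_fkKernel (hsum : ∑ i, p i = 1) (c : Fin K) :
    ∑ a, p a * fkKernel p δ a c = p c := by
  rw [← add_sum_erase _ _ (mem_univ c), fkKernel_self,
    sum_congr rfl fun a ha => by rw [fkKernel_of_ne p δ (ne_of_mem_erase ha).symm], ← sum_mul,
    sum_erase_eq_sub (mem_univ c), hsum]
  ring

theorem fkE_apply_zero [NeZero N] (hsum : ∑ i, p i = 1) (F : Fin K → ℝ) :
    fkE p δ (fun e : Fin N → Fin K => F (e 0)) = ∑ a, p a * F a := by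
  simpa [sum_fkKernel δ hsum] using fkE_mul_prod_erase_zero p δ F fun _ _ _ => 1

theorem fkE_apply_zero_apply [NeZero N] (hsum : ∑ i, p i = 1) {τ : Fin N} (hτ : τ ≠ 0)
    (F : Fin K → Fin K → ℝ) :
    fkE p δ (fun e => F (e 0) (e τ)) = ∑ a, p a * ∑ c, fkKernel p δ a c * F a c := by
  have hτ_mem : τ ∈ univ.erase 0 := mem_erase.2 ⟨hτ, mem_univ τ⟩
  have sum_kernel_mul_ite (a : Fin K) (j : Fin N) :
      ∑ c, fkKernel p δ a c * (if j = τ then F a c else 1)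
        = if j = τ then ∑ c, fkKernel p δ a c * F a c else 1 := by
    split_ifs <;> simp [sum_fkKernel δ hsum]
  simpa only [prod_ite_eq_of_mem' _ _ _ hτ_mem, sum_kernel_mul_ite, one_mul, mul_one] using
    fkE_mul_prod_erase_zero p δ (fun _ => 1) fun a j c => if j = τ then F a c else 1

theorem fkE_apply [NeZero N] (hsum : ∑ i, p i = 1) (τ : Fin N) (F : Fin K → ℝ) :
    fkE p δ (fun e : Fin N → Fin K => F (e τ)) = ∑ c, p c * F c := by
  rcases eq_or_ne τ 0 with rfl | hτ
  · exact fkE_apply_zero δ hsum F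
  rw [fkE_apply_zero_apply δ hsum hτ fun _ c => F c]
  simp only [mul_sum, ← mul_assoc]
  rw [sum_comm]
  simp only [← sum_mul, sum_mul_fkKernel δ hsum]

end FKDependent

theorem fkP_cov_first_general (K N : ℕ) [NeZero N]
    (p : Fin K → ℝ) (hsum : ∑ i, p i = 1)
    (δ : ℝ) (τ : Fin N) (hτ : τ ≠ 0)
    (i j : Fin K) :
    fkE p δ (fun e : Fin N → Fin K => (if e 0 = i then (1:ℝ) else 0) * (if e τ = j then 1 else 0))
      - fkE p δ (fun e : Fin N → Fin K => if e 0 = i then (1:ℝ) else 0)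
        * fkE p δ (fun e : Fin N → Fin K => if e τ = j then (1:ℝ) else 0)
      = if i = j then δ * p i * (1 - p i) else -(δ * p i * p j) := by
  have joint : fkE p δ (fun e : Fin N → Fin K =>
      (if e 0 = i then (1:ℝ) else 0) * (if e τ = j then 1 else 0)) = p i * fkKernel p δ i j := by
    rw [fkE_apply_zero_apply δ hsum hτ fun a c =>
      (if a = i then (1:ℝ) else 0) * (if c = j then 1 else 0)]
    simp
  rw [joint, fkE_apply_zero δ hsum fun a => if a = i then 1 else 0,
    fkE_apply δ hsum τ fun c => if c = j then 1 else 0]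
  simp only [mul_ite, mul_one, mul_zero, Finset.sum_ite_eq', Finset.mem_univ, if_true]
  rcases eq_or_ne i j with rfl | hij
  · rw [fkKernel_self, if_pos rfl]
    ring
  · rw [fkKernel_of_ne p δ hij.symm, if_neg hij]
    ring

/-- `Cov([ε₁ = i],[ε_τ = j]) = δ·pᵢ(1−pᵢ)` if `i = j` and
`−δ·pᵢ·p_j` otherwise, for all `τ ≥ 2`. -/
theorem fkP_cov_first (K N : ℕ) (hK : 1 ≤ K) [NeZero N]
    (p : Fin K → ℝ) (hp : ∀ i, 0 < p i ∧ p i < 1) (hsum : ∑ i, p i = 1)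
    (δ : ℝ) (hδ0 : 0 ≤ δ) (hδ1 : δ ≤ 1) (τ : Fin N) (hτ : τ ≠ 0)
    (i j : Fin K) :
    fkE p δ (fun e : Fin N → Fin K => (if e 0 = i then (1:ℝ) else 0) * (if e τ = j then 1 else 0))
      - fkE p δ (fun e : Fin N → Fin K => if e 0 = i then (1:ℝ) else 0)
        * fkE p δ (fun e : Fin N → Fin K => if e τ = j then (1:ℝ) else 0)
      = if i = j then δ * p i * (1 - p i) else -(δ * p i * p j) :=
  fkP_cov_first_general K N p hsum δ τ hτ i j
end

section
/- The moment generating function of the generalized multinomial count vector X is M_X(t) = ∑_{i=1}^K p_i·e^{t_i}·(p_i^+·e^{t_i} + ∑_{j≠i} p_j^-·e^{t_j})^{N−1}. -/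
open Finset

/-- Number of coordinates of the sequence `e` equal to category `i`. -/
def fkCount {K N : ℕ} (i : Fin K) (e : Fin N → Fin K) : ℕ :=
  (Finset.univ.filter (fun j : Fin N => e j = i)).card

/-! Given its first letter `i`, an FK-dependent sequence is i.i.d. with law `l ↦ p_l^±`
(`+` if `l = i`). The count MGF is `E[∏_j e^{t_{ε_j}}]`, so splitting off the first letter
the remaining `N - 1` factors are independent and each contributes `∑_l p_l^± e^{t_l}`. -/

theorem sum_mul_card_fiber {ι α R : Type*} [Fintype ι] [Fintype α] [DecidableEq α]
    [CommSemiring R] (t : α → R) (e : ι → α) :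
    ∑ i, t i * (#{j | e j = i} : R) = ∑ j, t (e j) := by
  rw [← sum_fiberwise univ e]
  refine sum_congr rfl fun i _ => ?_
  rw [sum_congr rfl fun j hj => by rw [(mem_filter.1 hj).2], sum_const, nsmul_eq_mul, mul_comm]

theorem sum_mul_prod_erase_eq_sum_mul_pow {ι α R : Type*} [Fintype ι] [DecidableEq ι]
    [Fintype α] [CommSemiring R] (i₀ : ι) (a : α → R) (w : α → α → R) :
    ∑ e : ι → α, a (e i₀) * ∏ j ∈ univ.erase i₀, w (e i₀) (e j)
      = ∑ x, a x * (∑ y, w x y) ^ (Fintype.card ι - 1) := by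
  rw [← (Equiv.funSplitAt i₀ α).symm.sum_comp, Fintype.sum_prod_type]
  refine sum_congr rfl fun x _ => ?_
  have hcard : Fintype.card {j // j ≠ i₀} = Fintype.card ι - 1 := by
    simp [Fintype.card_subtype_compl]
  rw [← hcard, ← card_univ, ← prod_const, Fintype.prod_sum, mul_sum]
  refine sum_congr rfl fun f _ => ?_
  rw [prod_subtype (univ.erase i₀) (p := (· ≠ i₀)) (by simp)]
  simp only [Equiv.funSplitAt_symm_apply, dite_true]
  exact congrArg _ (prod_congr rfl fun j _ => by simp [j.prop])

/-- `fkStep p δ i l` is `p_l^+` if `l = i` and `p_l^-` otherwise: the law of every letter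
after the first, given that the first one is `i`. -/
noncomputable def fkStep {K : ℕ} (p : Fin K → ℝ) (δ : ℝ) (i l : Fin K) : ℝ :=
  if l = i then p i + δ * (1 - p i) else p l * (1 - δ)

section

variable {K N : ℕ} (p : Fin K → ℝ) (δ : ℝ) (t : Fin K → ℝ)

theorem fkP_eq [NeZero N] (e : Fin N → Fin K) :
    fkP p δ e = p (e 0) * ∏ j ∈ univ.erase 0, fkStep p δ (e 0) (e j) := by
  rw [fkP, filter_ne']
  rfl

theorem exp_sum_mul_fkCount [NeZero N] (e : Fin N → Fin K) :
    Real.exp (∑ i, t i * (fkCount i e : ℝ))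
      = Real.exp (t (e 0)) * ∏ j ∈ univ.erase 0, Real.exp (t (e j)) := by
  simp only [fkCount]
  rw [sum_mul_card_fiber, Real.exp_sum]
  exact (mul_prod_erase _ (fun j => Real.exp (t (e j))) (mem_univ 0)).symm

theorem fkP_mul_exp_sum_mul_fkCount [NeZero N] (e : Fin N → Fin K) :
    fkP p δ e * Real.exp (∑ i, t i * (fkCount i e : ℝ))
      = p (e 0) * Real.exp (t (e 0))
          * ∏ j ∈ univ.erase 0, fkStep p δ (e 0) (e j) * Real.exp (t (e j)) := by
  rw [fkP_eq, exp_sum_mul_fkCount, prod_mul_distrib]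
  ring

theorem sum_fkStep_mul_exp (i : Fin K) :
    ∑ l, fkStep p δ i l * Real.exp (t l)
      = (p i + δ * (1 - p i)) * Real.exp (t i)
          + ∑ j ∈ univ.erase i, p j * (1 - δ) * Real.exp (t j) := by
  rw [← add_sum_erase _ _ (mem_univ i), fkStep, if_pos rfl]
  congr 1
  refine sum_congr rfl fun j hj => ?_
  rw [fkStep, if_neg (ne_of_mem_erase hj)]

end

theorem fk_mgf_general (K N : ℕ) [NeZero N]
    (p : Fin K → ℝ)
    (δ : ℝ) (t : Fin K → ℝ) :
    ∑ e : Fin N → Fin K,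
        fkP p δ e * Real.exp (∑ i, t i * (fkCount i e : ℝ))
      = ∑ i, p i * Real.exp (t i) *
          ((p i + δ * (1 - p i)) * Real.exp (t i)
            + ∑ j ∈ Finset.univ.erase i, p j * (1 - δ) * Real.exp (t j)) ^ (N - 1) := by
  simp only [fkP_mul_exp_sum_mul_fkCount]
  rw [sum_mul_prod_erase_eq_sum_mul_pow (0 : Fin N) (fun i => p i * Real.exp (t i))
    (fun i l => fkStep p δ i l * Real.exp (t l))]
  simp only [sum_fkStep_mul_exp, Fintype.card_fin]

/-- the moment generating function of the generalized
multinomial count vector is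
`M_X(t) = ∑ᵢ pᵢ·e^{tᵢ}·(pᵢ⁺·e^{tᵢ} + ∑_{j≠i} p_j⁻·e^{t_j})^{N−1}`. -/
theorem fk_mgf (K N : ℕ) (hK : 1 ≤ K) [NeZero N]
    (p : Fin K → ℝ) (hp : ∀ i, 0 < p i ∧ p i < 1) (hsum : ∑ i, p i = 1)
    (δ : ℝ) (hδ0 : 0 ≤ δ) (hδ1 : δ ≤ 1) (t : Fin K → ℝ) :
    ∑ e : Fin N → Fin K,
        fkP p δ e * Real.exp (∑ i, t i * (fkCount i e : ℝ))
      = ∑ i, p i * Real.exp (t i) *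
          ((p i + δ * (1 - p i)) * Real.exp (t i)
            + ∑ j ∈ Finset.univ.erase i, p j * (1 - δ) * Real.exp (t j)) ^ (N - 1) :=
  fk_mgf_general K N p δ t
end
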